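/- For any d, s ∈ ℕ and ε > 0 there exists r ∈ ℕ such that for any polynomial mapping φ ∈ Pol⁰_d([r], 𝕋) there exists a disjoint s-subcollection B in [r] such that dist(φ↓_B(γ), 0) < ε for every γ ∈ F(B). -/

import Mathlib

/-! Induction on the degree, a polynomial of degree `0` being constant. For degree `d + 1`, colour
the group with finitely many colours of diameter `< δ`; the multidimensional Hales–Jewett theorem,
applied to the colouring `α ↦ col (φ α)` of the Boolean cube on a large ground set, yields `F` and
disjoint `W₁, …, Wₘ` such that `φ (⋃_{j ∈ J} W_j ∪ F)` is `δ`-close to `φ F` for every `J`. The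
derivative `D_F φ` restricted to the subcollection `W` has degree `d`, so by induction it is
`ε`-close to `D_F φ ∅` on all unions `U` of some subcollection of `W`, and there
`φ U - φ ∅ = (φ (U ∪ F) - φ F) - (D_F φ U - D_F φ ∅)` is `(δ + ε)`-small. -/

open Finset

/-- The `β`-derivative of a map `φ : F(A) → H`: `D_β φ (α) = φ(α ∪ β) - φ(α)`. -/
def fsDeriv {ι H : Type*} [DecidableEq ι] [AddCommGroup H]
    (φ : Finset ι → H) (β : Finset ι) : Finset ι → H :=
  fun α => φ (α ∪ β) - φ α

/-- Iterated derivative `D_{β 0} ⋯ D_{β (n-1)} φ`. -/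
def iterDeriv {ι H : Type*} [DecidableEq ι] [AddCommGroup H] :
    {n : ℕ} → (Finset ι → H) → (Fin n → Finset ι) → (Finset ι → H)
  | 0, φ, _ => φ
  | _ + 1, φ, β => iterDeriv (fsDeriv φ (β 0)) (fun i => β i.succ)

/-- `φ : F(A) → H` is polynomial of degree ≤ d: any d+1 pairwise disjoint
derivatives (by finite subsets of `A`) kill `φ` on `F(A)` away from them. -/
def IsPolyDeg {ι H : Type*} [DecidableEq ι] [AddCommGroup H]
    (A : Finset ι) (d : ℕ) (φ : Finset ι → H) : Prop :=
  ∀ β : Fin (d + 1) → Finset ι, (∀ i, β i ⊆ A) →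
    (∀ i j, i ≠ j → Disjoint (β i) (β j)) →
    ∀ α : Finset ι, α ⊆ A → (∀ i, Disjoint α (β i)) → iterDeriv φ β α = 0

/-- `Pol⁰_d(A,H)`: polynomial maps of degree ≤ d vanishing at `∅`. -/
def Pol0 {ι H : Type*} [DecidableEq ι] [AddCommGroup H]
    (A : Finset ι) (d : ℕ) (φ : Finset ι → H) : Prop :=
  IsPolyDeg A d φ ∧ φ (∅ : Finset ι) = 0

/-- `‖x‖`: the distance from a real number `x` to `ℤ`. -/
noncomputable def distToInt (x : ℝ) : ℝ := |x - round x|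

open Function

universe u

theorem Pairwise.disjoint_biUnion {ι κ : Type*} [DecidableEq ι] {b : κ → Finset ι}
    (hb : Pairwise (Disjoint on b)) {s t : Finset κ} (hst : Disjoint s t) :
    Disjoint (s.biUnion b) (t.biUnion b) := by
  simp only [disjoint_biUnion_left, disjoint_biUnion_right]
  exact fun i hi j hj => hb (ne_of_mem_of_not_mem hj (disjoint_right.1 hst hi))

def IsDisjointSubcollection {ι κ : Type*} (A : Finset ι) (b : κ → Finset ι) : Prop :=
  (∀ j, (b j).Nonempty ∧ b j ⊆ A) ∧ Pairwise (Disjoint on b)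

namespace IsDisjointSubcollection

variable {ι ι' κ μ : Type*} {A B : Finset ι} {b : κ → Finset ι}

theorem mono (hb : IsDisjointSubcollection A b) (hAB : A ⊆ B) : IsDisjointSubcollection B b :=
  ⟨fun j => ⟨(hb.1 j).1, (hb.1 j).2.trans hAB⟩, hb.2⟩

theorem biUnion_subset [DecidableEq ι] (hb : IsDisjointSubcollection A b) (γ : Finset κ) :
    γ.biUnion b ⊆ A :=
  Finset.biUnion_subset.2 fun j _ => (hb.1 j).2

theorem map (hb : IsDisjointSubcollection A b) (f : ι ↪ ι') :
    IsDisjointSubcollection (A.map f) (fun j => (b j).map f) :=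
  ⟨fun j => ⟨(hb.1 j).1.map, map_subset_map.2 (hb.1 j).2⟩,
    fun _ _ hjj' => (disjoint_map f).2 (hb.2 hjj')⟩

theorem singleton (f : κ ↪ ι) (hf : ∀ j, f j ∈ A) :
    IsDisjointSubcollection A (fun j => {f j}) :=
  ⟨fun j => ⟨singleton_nonempty _, singleton_subset_iff.2 (hf j)⟩,
    fun _ _ hjj' => disjoint_singleton.2 (f.injective.ne hjj')⟩

theorem biUnion [DecidableEq ι] [Fintype κ] {c : μ → Finset κ} (hc : IsDisjointSubcollection univ c)
    (hb : IsDisjointSubcollection A b) :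
    IsDisjointSubcollection A (fun j => (c j).biUnion b) :=
  ⟨fun j => ⟨biUnion_nonempty.2 ((hc.1 j).1.imp fun i hi => ⟨hi, (hb.1 i).1⟩),
      hb.biUnion_subset _⟩,
    fun _ _ hjj' => hb.2.disjoint_biUnion (hc.2 hjj')⟩

end IsDisjointSubcollection

theorem Finset.exists_fin_embedding_of_le_card {ι : Type*} {A : Finset ι} {n : ℕ}
    (h : n ≤ #A) : ∃ f : Fin n ↪ ι, ∀ i, f i ∈ A :=
  ⟨(Fin.castLEEmb h).trans (A.equivFin.symm.toEmbedding.trans (Function.Embedding.subtype _)),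
    fun _ => (A.equivFin.symm _).2⟩

theorem Fin.pairwise_disjoint_cons {α : Type*} [PartialOrder α] [OrderBot α] {n : ℕ} {a : α}
    {f : Fin n → α} (ha : ∀ i, Disjoint a (f i)) (hf : Pairwise (Disjoint on f)) :
    Pairwise (Disjoint on (Fin.cons a f : Fin (n + 1) → α)) := by
  intro i j hij
  induction i using Fin.cases <;> induction j using Fin.cases
  · exact absurd rfl hij
  · exact ha _
  · exact (ha _).symm
  · exact hf (ne_of_apply_ne Fin.succ hij)

section Polynomial

variable {ι κ H : Type*} [DecidableEq ι] [AddCommGroup H] {A : Finset ι} {d : ℕ}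

theorem iterDeriv_cons {n : ℕ} (φ : Finset ι → H) (F : Finset ι) (β : Fin n → Finset ι) :
    iterDeriv φ (Fin.cons F β) = iterDeriv (fsDeriv φ F) β := rfl

theorem iterDeriv_comp_biUnion [DecidableEq κ] {n : ℕ} (θ : Finset ι → H) (W : κ → Finset ι)
    (β : Fin n → Finset κ) (α : Finset κ) :
    iterDeriv (fun δ => θ (δ.biUnion W)) β α
      = iterDeriv θ (fun i => (β i).biUnion W) (α.biUnion W) := by
  induction n generalizing θ with
  | zero => rfl
  | succ n ih =>
    have hderiv : fsDeriv (fun δ => θ (δ.biUnion W)) (β 0)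
        = fun δ => fsDeriv θ ((β 0).biUnion W) (δ.biUnion W) := by
      funext δ
      simp only [fsDeriv, union_biUnion]
    exact (congrArg (iterDeriv · _ α) hderiv).trans (ih _ _)

theorem IsPolyDeg.apply_eq_apply_empty {φ : Finset ι → H} (hφ : IsPolyDeg A 0 φ) {α : Finset ι}
    (hα : α ⊆ A) : φ α = φ ∅ := by
  have h := hφ (fun _ => α) (fun _ => hα)
    (fun i j hij => (hij (Subsingleton.elim (α := Fin 1) i j)).elim) ∅ (empty_subset _)
    (fun _ => disjoint_empty_left _)
  simpa [iterDeriv, fsDeriv, sub_eq_zero] using h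

theorem IsPolyDeg.fsDeriv {φ : Finset ι → H} (hφ : IsPolyDeg A (d + 1) φ) {F : Finset ι}
    (hF : F ⊆ A) : IsPolyDeg (A \ F) d (fsDeriv φ F) := by
  intro β hβA hβ α hαA hαβ
  rw [← iterDeriv_cons]
  exact hφ (Fin.cons F β) (Fin.cases hF fun i => (hβA i).trans sdiff_subset)
    (Fin.pairwise_disjoint_cons (fun i => disjoint_of_subset_right (hβA i) disjoint_sdiff) hβ)
    α (hαA.trans sdiff_subset)
    (Fin.cases (disjoint_of_subset_left hαA sdiff_disjoint) hαβ)

theorem IsPolyDeg.comp_biUnion [DecidableEq κ] [Fintype κ] {θ : Finset ι → H}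
    (hθ : IsPolyDeg A d θ) {W : κ → Finset ι} (hWA : ∀ j, W j ⊆ A)
    (hW : Pairwise (Disjoint on W)) : IsPolyDeg univ d (fun δ : Finset κ => θ (δ.biUnion W)) := by
  have hsub : ∀ δ : Finset κ, δ.biUnion W ⊆ A := fun δ => biUnion_subset.2 fun j _ => hWA j
  intro β _ hβ α _ hαβ
  rw [iterDeriv_comp_biUnion]
  exact hθ _ (fun i => hsub _) (fun i j hij => hW.disjoint_biUnion (hβ i j hij))
    _ (hsub α) (fun i => hW.disjoint_biUnion (hαβ i))

end Polynomial

theorem dist_le_dist_union_add_dist_fsDeriv {ι G : Type*} [DecidableEq ι]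
    [SeminormedAddCommGroup G] (φ : Finset ι → G) (F U V : Finset ι) :
    dist (φ U) (φ V) ≤ dist (φ (U ∪ F)) (φ (V ∪ F)) + dist (fsDeriv φ F U) (fsDeriv φ F V) := by
  simpa only [fsDeriv, sub_sub_cancel] using
    dist_sub_sub_le (φ (U ∪ F)) (fsDeriv φ F U) (φ (V ∪ F)) (fsDeriv φ F V)

theorem exists_finite_coloring_dist_lt {X : Type u} [PseudoMetricSpace X]
    (hX : TotallyBounded (Set.univ : Set X)) {ε : ℝ} (hε : 0 < ε) :
    ∃ (κ : Type u) (_ : Finite κ) (col : X → κ), ∀ x y, col x = col y → dist x y < ε := by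
  obtain ⟨t, ht, hcover⟩ := Metric.totallyBounded_iff.1 hX (ε / 2) (half_pos hε)
  have hcenter : ∀ x, ∃ c ∈ t, dist x c < ε / 2 := fun x => by
    simpa using hcover (Set.mem_univ x)
  choose center hcenter_mem hcenter using hcenter
  refine ⟨t, ht.to_subtype, fun x => ⟨center x, hcenter_mem x⟩, fun x y hxy => ?_⟩
  calc dist x y ≤ dist x (center x) + dist (center y) y := by
        rw [show center x = center y from congrArg Subtype.val hxy]; exact dist_triangle _ _ _
    _ < ε / 2 + ε / 2 := add_lt_add (hcenter x) (by rw [dist_comm]; exact hcenter y)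
    _ = ε := add_halves ε

theorem exists_mono_subcube_fin (κ η : Type*) [Finite κ] [Finite η] :
    ∃ n, ∀ C : Finset (Fin n) → κ, ∃ (F : Finset (Fin n)) (W : η → Finset (Fin n)),
      IsDisjointSubcollection Fᶜ W ∧ ∀ δ : Finset η, C (δ.biUnion W ∪ F) = C F := by
  classical
  obtain ⟨n, hn⟩ := Combinatorics.Subspace.exists_mono_in_high_dimension_fin Bool κ η
  refine ⟨n, fun C => ?_⟩
  obtain ⟨l, c, hc⟩ := hn fun x => C {i | x i}
  let F : Finset (Fin n) := {i | l.idxFun i = .inl true}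
  let W (e : η) : Finset (Fin n) := {i | l.idxFun i = .inr e}
  have hface (δ : Finset η) :
      ({i | l (fun e => decide (e ∈ δ)) i} : Finset (Fin n)) = δ.biUnion W ∪ F := by
    ext i
    rcases h : l.idxFun i with a | e <;>
      simp [F, W, h, Combinatorics.Subspace.apply_inl, Combinatorics.Subspace.apply_inr]
  have hcorner (δ : Finset η) : C (δ.biUnion W ∪ F) = c := hface δ ▸ hc _
  refine ⟨F, W, ⟨fun e => ⟨?_, ?_⟩, fun e e' hee' => ?_⟩, fun δ => ?_⟩
  · obtain ⟨i, hi⟩ := l.proper e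
    exact ⟨i, by simpa [W] using hi⟩
  · intro i hi
    simp_all [F, W]
  · simp only [W, onFun, disjoint_left, mem_filter, mem_univ, true_and]
    exact fun i hi => by simp [hi, hee']
  · simpa only [biUnion_empty, empty_union] using (hcorner δ).trans (hcorner ∅).symm

theorem exists_mono_subcube (κ η : Type*) [Finite κ] [Finite η] :
    ∃ n, ∀ {ι : Type u} [DecidableEq ι] (A : Finset ι), n ≤ #A → ∀ C : Finset ι → κ,
      ∃ (F : Finset ι) (W : η → Finset ι), F ⊆ A ∧ IsDisjointSubcollection (A \ F) W ∧
        ∀ δ : Finset η, C (δ.biUnion W ∪ F) = C F := by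
  obtain ⟨n, hn⟩ := exists_mono_subcube_fin κ η
  refine ⟨n, fun A hA C => ?_⟩
  obtain ⟨f, hfA⟩ := exists_fin_embedding_of_le_card hA
  obtain ⟨F, W, hW, hC⟩ := hn fun t => C (t.map f)
  refine ⟨F.map f, fun e => (W e).map f, ?_, (hW.map f).mono ?_, fun δ => ?_⟩
  · intro x hx
    obtain ⟨i, -, rfl⟩ := mem_map.1 hx
    exact hfA i
  · intro x hx
    obtain ⟨i, hi, rfl⟩ := mem_map.1 hx
    exact mem_sdiff.2 ⟨hfA i, by simpa using hi⟩
  · simpa only [map_eq_image, image_union, biUnion_image] using hC δ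

/-- The ground set ranges over all of `Type` because the induction on the degree passes to the
index type `Fin r` of a subcollection. -/
def HasSmallSubpolynomials (G : Type*) [SeminormedAddCommGroup G] (d s : ℕ) (ε : ℝ) : Prop :=
  ∃ r : ℕ, ∀ (ι : Type) [DecidableEq ι] (A : Finset ι), r ≤ #A → ∀ φ : Finset ι → G,
    IsPolyDeg A d φ → ∃ b : Fin s → Finset ι, IsDisjointSubcollection A b ∧
      ∀ γ : Finset (Fin s), dist (φ (γ.biUnion b)) (φ ∅) < ε

section SmallSubpolynomials

variable {G : Type*} [SeminormedAddCommGroup G]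

theorem hasSmallSubpolynomials_zero (s : ℕ) {ε : ℝ} (hε : 0 < ε) :
    HasSmallSubpolynomials G 0 s ε := by
  refine ⟨s, fun ι _ A hA φ hφ => ?_⟩
  obtain ⟨f, hfA⟩ := exists_fin_embedding_of_le_card hA
  have hb := IsDisjointSubcollection.singleton f hfA
  refine ⟨_, hb, fun γ => ?_⟩
  rwa [hφ.apply_eq_apply_empty (hb.biUnion_subset γ), dist_self]

theorem HasSmallSubpolynomials.succ (hG : TotallyBounded (Set.univ : Set G)) {d s : ℕ}
    {ε δ : ℝ} (h : HasSmallSubpolynomials G d s ε) (hδ : 0 < δ) :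
    HasSmallSubpolynomials G (d + 1) s (δ + ε) := by
  obtain ⟨r, hr⟩ := h
  obtain ⟨κ, _, col, hcol⟩ := exists_finite_coloring_dist_lt hG hδ
  obtain ⟨n, hn⟩ := exists_mono_subcube κ (Fin r)
  refine ⟨n, fun ι _ A hA φ hφ => ?_⟩
  obtain ⟨F, W, hFA, hW, hmono⟩ := hn A hA (col ∘ φ)
  obtain ⟨c, hc, hsmall⟩ := hr (Fin r) univ (by simp) _
    ((hφ.fsDeriv hFA).comp_biUnion (fun j => (hW.1 j).2) hW.2)
  refine ⟨fun j => (c j).biUnion W, (hc.biUnion hW).mono sdiff_subset, fun γ => ?_⟩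
  rw [← biUnion_biUnion]
  set U := (γ.biUnion c).biUnion W
  calc dist (φ U) (φ ∅)
      ≤ dist (φ (U ∪ F)) (φ (∅ ∪ F)) + dist (fsDeriv φ F U) (fsDeriv φ F ∅) :=
        dist_le_dist_union_add_dist_fsDeriv φ F U ∅
    _ < δ + ε := by
        refine add_lt_add ?_ ?_
        · rw [empty_union]
          exact hcol _ _ (hmono _)
        · simpa only [biUnion_empty] using hsmall γ

theorem hasSmallSubpolynomials (hG : TotallyBounded (Set.univ : Set G)) (d s : ℕ) {ε : ℝ}
    (hε : 0 < ε) : HasSmallSubpolynomials G d s ε := by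
  induction d generalizing ε with
  | zero => exact hasSmallSubpolynomials_zero s hε
  | succ d ih => simpa only [add_halves] using (ih (half_pos hε)).succ hG (half_pos hε)

end SmallSubpolynomials

/-- Corollary: for any d, s ∈ ℕ and ε > 0 there is r such that every
`φ ∈ Pol⁰_d([r], 𝕋)` has a disjoint s-subcollection `B` in `[r]` with all the
values of the subpolynomial `φ↓_B` ε-close to 0. -/
theorem pol0_torus_small_subpolynomial (d s : ℕ) (ε : ℝ) (hε : 0 < ε) :
    ∃ r : ℕ, ∀ φ : Finset ℕ → UnitAddCircle,
      Pol0 (Finset.Icc 1 r) d φ →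
      ∃ b : Fin s → Finset ℕ,
        (∀ j, (b j).Nonempty ∧ b j ⊆ Finset.Icc 1 r) ∧
        (∀ j j', j ≠ j' → Disjoint (b j) (b j')) ∧
        (∀ γ : Finset (Fin s), dist (φ (γ.biUnion b)) 0 < ε) := by
  obtain ⟨r, hr⟩ := hasSmallSubpolynomials (G := UnitAddCircle) isCompact_univ.totallyBounded d s hε
  refine ⟨r, fun φ ⟨hφ, hφ₀⟩ => ?_⟩
  obtain ⟨b, hb, hsmall⟩ := hr ℕ (Icc 1 r) (by simp) φ hφ
  exact ⟨b, hb.1, hb.2, fun γ => hφ₀ ▸ hsmall γ⟩
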